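/- arXiv:1705.03953 — 3 statements merged into one kernel-verified Lean document; each statement's English description precedes it below -/
import Mathlib

section
/- Let P ⊆ ℝ^d be a finite set of points in general position, and let ε > 0 be such that for every ℓ with 1 ≤ ℓ ≤ d, no affine subspace of ℝ^d of dimension ℓ − 1 intersects more than ℓ of the closed balls B_ε(x) of radius ε centered at points x ∈ P. Let H ⊆ ℝ^d be an affine hyperplane with open half-spaces H⁺ and H⁻, and let P = P⁺ ⊔ P⁻ be a partition of P such that every x ∈ P⁺ satisfies B_ε(x) ∩ H⁺ ≠ ∅ and every x ∈ P⁻ satisfies B_ε(x) ∩ H⁻ ≠ ∅. Then the convex hulls of P⁺ and P⁻ are disjoint: conv(P⁺) ∩ conv(P⁻) = ∅. -/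
/-!
If the two hulls met, lifting `P⁺` to height `1` and `-P⁻` to height `-1` and applying
Carathéodory's theorem would give an affine dependence `∑ μᵢ pᵢ = 0`, `∑ μᵢ = 0` among points of
`P`, with `μᵢ > 0` on `P⁺` and `μᵢ < 0` on `P⁻`. The flat condition puts the centres in general
position, so exactly `d + 2` points are involved. For any choice of `qᵢ ∈ B_ε(pᵢ)`, every `d + 1`
of the `qᵢ` are affinely independent (otherwise their span is a low-dimensional flat meeting too
many balls), so the cofactor weights `λ(q)` of the affine dependence of the `qᵢ` never vanish.
The product of the balls is connected, so `λ(q)` keeps the signs of `λ(p)`, which is proportional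
to `μ`. Choosing every `qᵢ` on the side of `H` prescribed by the sign of `μᵢ` makes all terms of
`∑ λᵢ(q) f(qᵢ) = 0` have the same strict sign.
-/

open Finset Metric Matrix

namespace Matrix

variable {R : Type*} [CommRing R] {n : ℕ}

def cofactorWeights (M : Matrix (Fin n) (Fin (n + 1)) R) (j : Fin (n + 1)) : R :=
  (-1) ^ (j : ℕ) * (M.submatrix id j.succAbove).det

theorem mulVec_cofactorWeights (M : Matrix (Fin n) (Fin (n + 1)) R) :
    M *ᵥ cofactorWeights M = 0 := by
  ext k
  -- Laplace expansion of the determinant of `M` with its row `k` repeated on top.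
  set A : Matrix (Fin (n + 1)) (Fin (n + 1)) R := of (Fin.cons (M k) M)
  have hA : A.det = 0 := det_zero_of_row_eq (Fin.succ_ne_zero k).symm rfl
  rw [det_succ_row_zero] at hA
  rw [Pi.zero_apply, ← hA, mulVec, dotProduct]
  refine sum_congr rfl fun j _ => ?_
  change M k j * _ = (-1) ^ (j : ℕ) * M k j * (M.submatrix id j.succAbove).det
  rw [cofactorWeights]
  ring

end Matrix

section AffineDependence

variable {d : ℕ}

def homogeneousCoords (x : EuclideanSpace ℝ (Fin d)) : Fin (d + 1) → ℝ :=
  Fin.snoc (fun r => x r) 1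

def homogeneousMatrix {m : ℕ} (y : Fin m → EuclideanSpace ℝ (Fin d)) :
    Matrix (Fin (d + 1)) (Fin m) ℝ :=
  of fun r c => homogeneousCoords (y c) r

theorem homogeneousMatrix_mulVec_eq_zero_iff {m : ℕ} (y : Fin m → EuclideanSpace ℝ (Fin d))
    (w : Fin m → ℝ) :
    homogeneousMatrix y *ᵥ w = 0 ↔ ∑ i, w i = 0 ∧ ∑ i, w i • y i = 0 := by
  rw [funext_iff, Fin.forall_fin_succ', and_comm, PiLp.ext_iff]
  simp [homogeneousMatrix, homogeneousCoords, mulVec, dotProduct, mul_comm, WithLp.ofLp_sum]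

theorem det_homogeneousMatrix_ne_zero {z : Fin (d + 1) → EuclideanSpace ℝ (Fin d)}
    (hz : AffineIndependent ℝ z) : (homogeneousMatrix z).det ≠ 0 := by
  intro h
  obtain ⟨w, hw, hzw⟩ := exists_mulVec_eq_zero_iff.mpr h
  obtain ⟨hw₀, hw₁⟩ := (homogeneousMatrix_mulVec_eq_zero_iff z w).mp hzw
  exact hw (funext fun i => hz.eq_zero_of_sum_eq_zero hw₀ hw₁ i (mem_univ i))

def affineDependenceWeights (y : Fin (d + 2) → EuclideanSpace ℝ (Fin d)) : Fin (d + 2) → ℝ :=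
  cofactorWeights (homogeneousMatrix y)

theorem sum_affineDependenceWeights_and_smul (y : Fin (d + 2) → EuclideanSpace ℝ (Fin d)) :
    ∑ j, affineDependenceWeights y j = 0 ∧ ∑ j, affineDependenceWeights y j • y j = 0 :=
  (homogeneousMatrix_mulVec_eq_zero_iff y _).mp (mulVec_cofactorWeights _)

theorem affineDependenceWeights_ne_zero {y : Fin (d + 2) → EuclideanSpace ℝ (Fin d)}
    {j : Fin (d + 2)} (hy : AffineIndependent ℝ (y ∘ j.succAbove)) :
    affineDependenceWeights y j ≠ 0 :=
  mul_ne_zero (pow_ne_zero _ (neg_ne_zero.mpr one_ne_zero)) (det_homogeneousMatrix_ne_zero hy)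

theorem continuous_affineDependenceWeights (j : Fin (d + 2)) :
    Continuous fun y : Fin (d + 2) → EuclideanSpace ℝ (Fin d) => affineDependenceWeights y j := by
  refine continuous_const.mul (Continuous.matrix_det (continuous_matrix fun r c => ?_))
  unfold homogeneousMatrix homogeneousCoords
  fun_prop

end AffineDependence

section Convex

variable {𝕜 E : Type*} [Field 𝕜] [LinearOrder 𝕜] [IsStrictOrderedRing 𝕜] [AddCommGroup E]
  [Module 𝕜 E]

theorem exists_fin_affineIndependent_of_mem_convexHull {s : Set E} {x : E}
    (hx : x ∈ convexHull 𝕜 s) :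
    ∃ (k : ℕ) (z : Fin k → E) (w : Fin k → 𝕜), Set.range z ⊆ s ∧ AffineIndependent 𝕜 z ∧
      (∀ i, 0 < w i) ∧ ∑ i, w i = 1 ∧ ∑ i, w i • z i = x := by
  obtain ⟨ι, _, z, w, hzs, hz, hw, hw₁, hwz⟩ := eq_pos_convex_span_of_mem_convexHull hx
  let e := (Fintype.equivFin ι).symm
  refine ⟨_, z ∘ e, w ∘ e, (Set.range_comp_subset_range _ _).trans hzs,
    hz.comp_embedding e.toEmbedding, fun i => hw _, ?_, ?_⟩
  · rwa [← e.sum_comp] at hw₁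
  · rwa [← e.sum_comp] at hwz

theorem zero_mem_convexHull_prod_union_of_inter_nonempty {A B : Set E}
    (h : (convexHull 𝕜 A ∩ convexHull 𝕜 B).Nonempty) :
    (0 : E × 𝕜) ∈ convexHull 𝕜 (A ×ˢ {1} ∪ (-B) ×ˢ {-1}) := by
  obtain ⟨x, hxA, hxB⟩ := h
  have hA : (x, (1 : 𝕜)) ∈ convexHull 𝕜 (A ×ˢ {1} ∪ (-B) ×ˢ {-1}) :=
    convexHull_mono Set.subset_union_left <| by
      rw [convexHull_prod, convexHull_singleton]; exact ⟨hxA, rfl⟩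
  have hB : (-x, (-1 : 𝕜)) ∈ convexHull 𝕜 (A ×ˢ {1} ∪ (-B) ×ˢ {-1}) :=
    convexHull_mono Set.subset_union_right <| by
      rw [convexHull_prod, convexHull_singleton, convexHull_neg]
      exact ⟨Set.neg_mem_neg.mpr hxB, rfl⟩
  convert convex_convexHull 𝕜 _ hA hB (by norm_num : (0 : 𝕜) ≤ 1 / 2)
    (by norm_num : (0 : 𝕜) ≤ 1 / 2) (add_halves 1) using 1
  ext <;> simp only [Prod.smul_mk, Prod.fst_add, Prod.snd_add, Prod.fst_zero, Prod.snd_zero] <;>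
    module

theorem exists_signed_affineDependence_of_convexHull_inter_nonempty [FiniteDimensional 𝕜 E]
    {A B : Set E} (hAB : Disjoint A B) (h : (convexHull 𝕜 A ∩ convexHull 𝕜 B).Nonempty) :
    ∃ (k : ℕ) (p : Fin k → E) (μ : Fin k → 𝕜), 0 < k ∧ k ≤ Module.finrank 𝕜 E + 2 ∧
      Function.Injective p ∧ ∑ i, μ i = 0 ∧ ∑ i, μ i • p i = 0 ∧
      ∀ i, (0 < μ i ∧ p i ∈ A) ∨ (μ i < 0 ∧ p i ∈ B) := by
  have h0 := zero_mem_convexHull_prod_union_of_inter_nonempty (𝕜 := 𝕜) h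
  obtain ⟨k, z, w, hzS, hz, hw, hw₁, hwz⟩ := exists_fin_affineIndependent_of_mem_convexHull h0
  have hzS' : ∀ i, ((z i).2 = 1 ∧ (z i).1 ∈ A) ∨ ((z i).2 = -1 ∧ -(z i).1 ∈ B) := fun i => by
    have := hzS (Set.mem_range_self i)
    simp only [Set.mem_union, Set.mem_prod, Set.mem_singleton_iff, Set.mem_neg] at this
    tauto
  have hsq : ∀ i, (z i).2 * (z i).2 = 1 := fun i => by
    rcases hzS' i with ⟨h, -⟩ | ⟨h, -⟩ <;> simp [h]
  refine ⟨k, fun i => (z i).2 • (z i).1, fun i => (z i).2 * w i, ?_, ?_, ?_, ?_, ?_, ?_⟩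
  · by_contra! hk
    obtain rfl : k = 0 := by omega
    simp at hw₁
  · have := hz.card_le_finrank_succ.trans
      (Nat.succ_le_succ (Submodule.finrank_le (vectorSpan 𝕜 (Set.range z))))
    simpa [Module.finrank_prod] using this
  · intro i j hij
    refine hz.injective ?_
    rcases hzS' i with ⟨hi, hiA⟩ | ⟨hi, hiB⟩ <;> rcases hzS' j with ⟨hj, hjA⟩ | ⟨hj, hjB⟩ <;>
      simp only [hi, hj, one_smul, neg_smul, neg_inj] at hij
    · exact Prod.ext hij (hi.trans hj.symm)
    · exact (hAB.ne_of_mem hiA hjB hij).elim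
    · exact (hAB.ne_of_mem hjA hiB hij.symm).elim
    · exact Prod.ext hij (hi.trans hj.symm)
  · simpa only [Prod.snd_sum, Prod.smul_snd, Prod.snd_zero, smul_eq_mul, mul_comm]
      using congrArg Prod.snd hwz
  · have := congrArg Prod.fst hwz
    simp only [Prod.fst_sum, Prod.smul_fst, Prod.fst_zero] at this
    rw [← this]
    refine sum_congr rfl fun i _ => ?_
    rw [smul_smul, mul_right_comm, hsq, one_mul]
  · intro i
    rcases hzS' i with ⟨hi, hiA⟩ | ⟨hi, hiB⟩
    · left; simpa [hi] using ⟨hw i, hiA⟩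
    · right; simpa [hi] using ⟨hw i, hiB⟩

end Convex

section Transversal

variable {E : Type*} [NormedAddCommGroup E] [NormedSpace ℝ E]

def FlatsMeetFewBalls (P : Set E) (ε : ℝ) (n : ℕ) : Prop :=
  ∀ ℓ : ℕ, 1 ≤ ℓ → ℓ ≤ n → ∀ L : AffineSubspace ℝ E, (L : Set E).Nonempty →
    Module.finrank ℝ L.direction = ℓ - 1 → {x ∈ P | ((L : Set E) ∩ closedBall x ε).Nonempty}.ncard ≤ ℓ

theorem FlatsMeetFewBalls.affineIndependent {P : Set E} {ε : ℝ} {n : ℕ}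
    (hP : FlatsMeetFewBalls P ε n) (hPfin : P.Finite) {ι : Type*} [Fintype ι]
    (hι : Fintype.card ι ≤ n + 1) {x : ι → E} (hx : Function.Injective x) (hxP : ∀ i, x i ∈ P)
    {y : ι → E} (hy : ∀ i, y i ∈ closedBall (x i) ε) : AffineIndependent ℝ y := by
  rcases le_or_gt (Fintype.card ι) 1 with hι₁ | hι₁
  · have := Fintype.card_le_one_iff_subsingleton.mp hι₁
    exact affineIndependent_of_subsingleton ℝ y
  obtain ⟨m, hm⟩ := Nat.exists_eq_add_of_le' hι₁
  have : Nonempty ι := Fintype.card_pos_iff.mp (by omega)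
  by_contra hdep
  set L := affineSpan ℝ (Set.range y)
  have hdim : Module.finrank ℝ L.direction ≤ m := by
    rw [direction_affineSpan]
    exact (finrank_vectorSpan_le_iff_not_affineIndependent ℝ y hm).mpr hdep
  have hmet : Set.range x ⊆ {x' ∈ P | ((L : Set E) ∩ closedBall x' ε).Nonempty} := by
    rintro _ ⟨i, rfl⟩
    exact ⟨hxP i, y i, subset_affineSpan ℝ _ (Set.mem_range_self i), hy i⟩
  have hcard := (Set.ncard_le_ncard hmet (hPfin.subset (Set.sep_subset _ _))).trans
    (hP (Module.finrank ℝ L.direction + 1) (by omega) (by omega) L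
      ((affineSpan_nonempty ℝ).mpr (Set.range_nonempty y)) rfl)
  rw [Set.ncard_range_of_injective hx, Nat.card_eq_fintype_card] at hcard
  omega

end Transversal

theorem IsPreconnected.mul_pos_of_forall_ne_zero {X : Type*} [TopologicalSpace X] {s : Set X}
    (hs : IsPreconnected s) {g : X → ℝ} (hg : ContinuousOn g s) (hg₀ : ∀ x ∈ s, g x ≠ 0)
    {a b : X} (ha : a ∈ s) (hb : b ∈ s) : 0 < g a * g b := by
  by_contra! hab
  have h0 : (0 : ℝ) ∈ Set.uIcc (g a) (g b) := by
    rcases mul_nonpos_iff.mp hab with ⟨h₁, h₂⟩ | ⟨h₁, h₂⟩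
    exacts [Set.mem_uIcc_of_ge h₂ h₁, Set.mem_uIcc_of_le h₁ h₂]
  obtain ⟨x, hx, hx₀⟩ := (hs.image g hg).ordConnected.uIcc_subset
    (Set.mem_image_of_mem g ha) (Set.mem_image_of_mem g hb) h0
  exact hg₀ x hx hx₀

theorem AffineIndependent.mul_eq_mul_of_affineDependence {k V : Type*} [Field k] [AddCommGroup V]
    [Module k V] {n : ℕ} {p : Fin (n + 2) → V} {i₀ : Fin (n + 2)}
    (hp : AffineIndependent k (p ∘ i₀.succAbove)) {w₁ w₂ : Fin (n + 2) → k}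
    (hw₁ : ∑ i, w₁ i = 0) (hw₁p : ∑ i, w₁ i • p i = 0)
    (hw₂ : ∑ i, w₂ i = 0) (hw₂p : ∑ i, w₂ i • p i = 0) (j : Fin (n + 2)) :
    w₁ i₀ * w₂ j = w₂ i₀ * w₁ j := by
  set w : Fin (n + 2) → k := fun i => w₁ i₀ * w₂ i - w₂ i₀ * w₁ i
  have hw : ∑ i, w i = 0 := by
    simp only [w, sum_sub_distrib, ← mul_sum, hw₁, hw₂, mul_zero, sub_zero]
  have hwp : ∑ i, w i • p i = 0 := by
    simp only [w, sub_smul, mul_smul, sum_sub_distrib, ← smul_sum, hw₁p, hw₂p, smul_zero, sub_zero]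
  have hw₀ : w i₀ = 0 := by simp only [w]; ring
  rw [Fin.sum_univ_succAbove _ i₀, hw₀, zero_add] at hw
  rw [Fin.sum_univ_succAbove _ i₀, hw₀, zero_smul, zero_add] at hwp
  obtain rfl | ⟨c, rfl⟩ := eq_or_ne j i₀ |>.imp id Fin.exists_succAbove_eq
  · ring
  · exact sub_eq_zero.mp (hp.eq_zero_of_sum_eq_zero hw hwp c (mem_univ c))

theorem AffineMap.sum_smul_apply_eq_zero {k V W ι : Type*} [Ring k] [AddCommGroup V] [Module k V]
    [AddCommGroup W] [Module k W] (f : V →ᵃ[k] W) {s : Finset ι} {w : ι → k} {p : ι → V}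
    (hw : ∑ i ∈ s, w i = 0) (hwp : ∑ i ∈ s, w i • p i = 0) : ∑ i ∈ s, w i • f (p i) = 0 := by
  have hf : ∀ v, f v = f.linear v + f 0 := fun v => by
    rw [← sub_eq_iff_eq_add, ← vsub_eq_sub, ← f.linearMap_vsub, vsub_eq_sub, sub_zero]
  calc ∑ i ∈ s, w i • f (p i) = f.linear (∑ i ∈ s, w i • p i) + (∑ i ∈ s, w i) • f 0 := by
        simp_rw [map_sum, map_smul, sum_smul, ← sum_add_distrib, ← smul_add, ← hf]
    _ = 0 := by rw [hw, hwp, map_zero, zero_smul, add_zero]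

theorem exists_apply_mul_nonpos_of_affineDependence {d : ℕ} {ε : ℝ} (hε : 0 ≤ ε)
    {p q : Fin (d + 2) → EuclideanSpace ℝ (Fin d)}
    (hp : ∀ y ∈ Set.univ.pi fun i => closedBall (p i) ε, ∀ j : Fin (d + 2),
      AffineIndependent ℝ (y ∘ j.succAbove))
    (hq : q ∈ Set.univ.pi fun i => closedBall (p i) ε)
    {μ : Fin (d + 2) → ℝ} (hμ : ∑ i, μ i = 0) (hμp : ∑ i, μ i • p i = 0)
    (f : EuclideanSpace ℝ (Fin d) →ᵃ[ℝ] ℝ) : ∃ i, f (q i) * μ i ≤ 0 := by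
  by_contra! hfq
  have hμ₀ : ∀ i, μ i ≠ 0 := fun i h => by simpa [h] using hfq i
  have hpp : p ∈ Set.univ.pi fun i => closedBall (p i) ε := fun i _ => mem_closedBall_self hε
  set wp := affineDependenceWeights p
  set wq := affineDependenceWeights q
  have hsign : ∀ j, 0 < wp j * wq j := fun j =>
    (isPreconnected_univ_pi fun i => (convex_closedBall (p i) ε).isPreconnected
      ).mul_pos_of_forall_ne_zero (continuous_affineDependenceWeights j).continuousOn
      (fun y hy => affineDependenceWeights_ne_zero (hp y hy j)) hpp hq
  obtain ⟨hwp, hwpp⟩ := sum_affineDependenceWeights_and_smul p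
  have hprop := (hp p hpp 0).mul_eq_mul_of_affineDependence hwp hwpp hμ hμp
  have hterm : ∀ j, 0 < μ 0 * wp 0 * (wq j • f (q j)) := fun j => by
    refine pos_of_mul_pos_left ?_ (sq_nonneg (μ j))
    calc 0 < μ 0 ^ 2 * ((wp j * wq j) * (f (q j) * μ j)) :=
          mul_pos (pow_two_pos_of_ne_zero (hμ₀ 0)) (mul_pos (hsign j) (hfq j))
      _ = _ := by rw [smul_eq_mul]; linear_combination -(μ 0 * wq j * f (q j) * μ j) * hprop j
  obtain ⟨hwq, hwqq⟩ := sum_affineDependenceWeights_and_smul q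
  have hsum := sum_pos (fun j _ => hterm j) univ_nonempty
  rw [← mul_sum, f.sum_smul_apply_eq_zero hwq hwqq, mul_zero] at hsum
  exact hsum.false

theorem convex_hulls_disjoint_of_balls_meet_halfspaces_general
    (d : ℕ)
    (P Pp Pm : Finset (EuclideanSpace ℝ (Fin d)))
    (ε : ℝ) (hε : 0 < ε)
    (hflat : ∀ ℓ : ℕ, 1 ≤ ℓ → ℓ ≤ d →
      ∀ L : AffineSubspace ℝ (EuclideanSpace ℝ (Fin d)),
        (L : Set (EuclideanSpace ℝ (Fin d))).Nonempty →
        Module.finrank ℝ L.direction = ℓ - 1 →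
        {x ∈ (P : Set (EuclideanSpace ℝ (Fin d))) |
          ((L : Set (EuclideanSpace ℝ (Fin d))) ∩ Metric.closedBall x ε).Nonempty}.ncard ≤ ℓ)
    (f : EuclideanSpace ℝ (Fin d) →ᵃ[ℝ] ℝ)
    (hdisj : Disjoint Pp Pm)
    (hunion : (Pp : Set (EuclideanSpace ℝ (Fin d))) ∪ (Pm : Set (EuclideanSpace ℝ (Fin d)))
      = (P : Set (EuclideanSpace ℝ (Fin d))))
    (hPp : ∀ x ∈ Pp, ∃ y ∈ Metric.closedBall x ε, 0 < f y)
    (hPm : ∀ x ∈ Pm, ∃ y ∈ Metric.closedBall x ε, f y < 0) :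
    convexHull ℝ (Pp : Set (EuclideanSpace ℝ (Fin d))) ∩
      convexHull ℝ (Pm : Set (EuclideanSpace ℝ (Fin d))) = ∅ := by
  have hP : FlatsMeetFewBalls (P : Set (EuclideanSpace ℝ (Fin d))) ε d := hflat
  by_contra hne
  obtain ⟨k, p, μ, hk₀, hk, hp, hμ, hμp, hsign⟩ :=
    exists_signed_affineDependence_of_convexHull_inter_nonempty (Finset.disjoint_coe.mpr hdisj)
      (Set.nonempty_iff_ne_empty.mpr hne)
  have hpP : ∀ i, p i ∈ (P : Set (EuclideanSpace ℝ (Fin d))) := fun i =>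
    hunion ▸ ((hsign i).imp And.right And.right : p i ∈ (Pp ∪ Pm : Set _))
  obtain rfl : k = d + 2 := by
    rw [finrank_euclideanSpace_fin] at hk
    refine hk.antisymm (not_lt.mp fun hlt => ?_)
    have := (hP.affineIndependent P.finite_toSet (by simpa using Nat.le_of_lt_succ hlt) hp hpP
      fun i => mem_closedBall_self hε.le).eq_zero_of_sum_eq_zero hμ hμp ⟨0, hk₀⟩ (mem_univ _)
    rcases hsign ⟨0, hk₀⟩ with ⟨h, -⟩ | ⟨h, -⟩
    exacts [h.ne' this, h.ne this]
  have hball : ∀ i, ∃ y ∈ closedBall (p i) ε, 0 < f y * μ i := fun i => by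
    rcases hsign i with ⟨hμi, hi⟩ | ⟨hμi, hi⟩
    · obtain ⟨y, hy, hfy⟩ := hPp _ hi
      exact ⟨y, hy, mul_pos hfy hμi⟩
    · obtain ⟨y, hy, hfy⟩ := hPm _ hi
      exact ⟨y, hy, mul_pos_of_neg_of_neg hfy hμi⟩
  choose q hq hfq using hball
  obtain ⟨i, hi⟩ := exists_apply_mul_nonpos_of_affineDependence hε.le
    (fun y hy j => hP.affineIndependent P.finite_toSet (by simp)
      (hp.comp j.succAbove_right_injective) (fun _ => hpP _) fun c => hy _ (Set.mem_univ _))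
    (fun i _ => hq i) hμ hμp f
  exact (hfq i).not_ge hi

/-- **Separation lemma.**
Let `P ⊆ ℝ^d` be a finite set of points in general position and `ε > 0` such that for every
`ℓ` with `1 ≤ ℓ ≤ d`, no affine subspace of dimension `ℓ - 1` intersects more than `ℓ` of the
closed `ε`-balls centered at points of `P`.  Let `H` be the affine hyperplane given as the
zero set of a nonconstant affine functional `f`, with open half-spaces `H⁺ = {f > 0}` and
`H⁻ = {f < 0}`, and let `P = P⁺ ⊔ P⁻` be a partition such that every ball around a point of
`P⁺` meets `H⁺` and every ball around a point of `P⁻` meets `H⁻`.  Then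
`conv(P⁺) ∩ conv(P⁻) = ∅`. -/
theorem convex_hulls_disjoint_of_balls_meet_halfspaces
    (d : ℕ)
    (P Pp Pm : Finset (EuclideanSpace ℝ (Fin d)))
    (hgp : ∀ s : Finset (EuclideanSpace ℝ (Fin d)), s ⊆ P → s.card ≤ d + 1 →
      AffineIndependent ℝ (fun p : (s : Set (EuclideanSpace ℝ (Fin d))) =>
        (p : EuclideanSpace ℝ (Fin d))))
    (ε : ℝ) (hε : 0 < ε)
    (hflat : ∀ ℓ : ℕ, 1 ≤ ℓ → ℓ ≤ d →
      ∀ L : AffineSubspace ℝ (EuclideanSpace ℝ (Fin d)),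
        (L : Set (EuclideanSpace ℝ (Fin d))).Nonempty →
        Module.finrank ℝ L.direction = ℓ - 1 →
        {x ∈ (P : Set (EuclideanSpace ℝ (Fin d))) |
          ((L : Set (EuclideanSpace ℝ (Fin d))) ∩ Metric.closedBall x ε).Nonempty}.ncard ≤ ℓ)
    (f : EuclideanSpace ℝ (Fin d) →ᵃ[ℝ] ℝ) (hf : f.linear ≠ 0)
    (hdisj : Disjoint Pp Pm)
    (hunion : (Pp : Set (EuclideanSpace ℝ (Fin d))) ∪ (Pm : Set (EuclideanSpace ℝ (Fin d)))
      = (P : Set (EuclideanSpace ℝ (Fin d))))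
    (hPp : ∀ x ∈ Pp, ∃ y ∈ Metric.closedBall x ε, 0 < f y)
    (hPm : ∀ x ∈ Pm, ∃ y ∈ Metric.closedBall x ε, f y < 0) :
    convexHull ℝ (Pp : Set (EuclideanSpace ℝ (Fin d))) ∩
      convexHull ℝ (Pm : Set (EuclideanSpace ℝ (Fin d))) = ∅ :=
  convex_hulls_disjoint_of_balls_meet_halfspaces_general d P Pp Pm ε hε hflat f hdisj hunion hPp hPm
end

section
/- Let P ⊆ ℝ^d be a finite set of points in general position, where d ≥ 1. Then there exists ε > 0 such that for every ℓ with 1 ≤ ℓ ≤ d, no affine subspace of ℝ^d of dimension ℓ − 1 intersects more than ℓ of the closed balls of radius ε centered at the points of P. -/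
/-- The set of affinely independent tuples in a real normed space is open. -/
lemma isOpen_setOf_affineIndependent' {ι : Type*} [Finite ι] {E : Type*}
    [NormedAddCommGroup E] [NormedSpace ℝ E] :
    IsOpen {p : ι → E | AffineIndependent ℝ p} := by
  rcases isEmpty_or_nonempty ι with h | h
  · have : {p : ι → E | AffineIndependent ℝ p} = Set.univ := by
      ext p
      simp [affineIndependent_of_subsingleton]
    rw [this]
    exact isOpen_univ
  · obtain ⟨i₀⟩ := h
    have hset : {p : ι → E | AffineIndependent ℝ p} =
        (fun p : ι → E => fun j : {x : ι // x ≠ i₀} => p j -ᵥ p i₀) ⁻¹'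
          {q : {x : ι // x ≠ i₀} → E | LinearIndependent ℝ q} := by
      ext p
      simp only [Set.mem_setOf_eq, Set.mem_preimage]
      exact affineIndependent_iff_linearIndependent_vsub ℝ p i₀
    rw [hset]
    have hcont : Continuous (fun p : ι → E => fun j : {x : ι // x ≠ i₀} => p j -ᵥ p i₀) :=
      continuous_pi fun j => (continuous_apply (j : ι)).vsub (continuous_apply i₀)
    exact (isOpen_setOf_linearIndependent (𝕜 := ℝ) (E := E)).preimage hcont

/-- For a finite set `P` of points in general position in `ℝ^d` (with `d ≥ 1`), there exists
`ε > 0` such that for every `ℓ` with `1 ≤ ℓ ≤ d`, no affine subspace of dimension `ℓ - 1`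
intersects more than `ℓ` of the closed `ε`-balls centered at the points of `P`. -/
theorem exists_eps_flats_meet_few_balls
    (d : ℕ) (hd : 1 ≤ d)
    (P : Finset (EuclideanSpace ℝ (Fin d)))
    (hgp : ∀ s : Finset (EuclideanSpace ℝ (Fin d)), s ⊆ P → s.card ≤ d + 1 →
      AffineIndependent ℝ (fun p : (s : Set (EuclideanSpace ℝ (Fin d))) =>
        (p : EuclideanSpace ℝ (Fin d)))) :
    ∃ ε : ℝ, 0 < ε ∧
      ∀ ℓ : ℕ, 1 ≤ ℓ → ℓ ≤ d →
        ∀ L : AffineSubspace ℝ (EuclideanSpace ℝ (Fin d)),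
          (L : Set (EuclideanSpace ℝ (Fin d))).Nonempty →
          Module.finrank ℝ L.direction = ℓ - 1 →
          {x ∈ (P : Set (EuclideanSpace ℝ (Fin d))) |
            ((L : Set (EuclideanSpace ℝ (Fin d))) ∩ Metric.closedBall x ε).Nonempty}.ncard
            ≤ ℓ := by
  classical
  -- For every subset `s` of `P` of size at most `d+1`, there is `ε > 0` such that any
  -- perturbation of the points of `s` by less than `ε` remains affinely independent.
  have key : ∀ s : Finset (EuclideanSpace ℝ (Fin d)), ∃ ε : ℝ, 0 < ε ∧
      (s ⊆ P → s.card ≤ d + 1 → ∀ y : ((s : Set (EuclideanSpace ℝ (Fin d))) : Type) → EuclideanSpace ℝ (Fin d),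
        (∀ i : ((s : Set (EuclideanSpace ℝ (Fin d))) : Type), dist (y i) (i : EuclideanSpace ℝ (Fin d)) < ε) → AffineIndependent ℝ y) := by
    intro s
    by_cases hs : s ⊆ P ∧ s.card ≤ d + 1
    · have hindep := hgp s hs.1 hs.2
      have hopen : IsOpen {p : ((s : Set (EuclideanSpace ℝ (Fin d))) : Type) → EuclideanSpace ℝ (Fin d) | AffineIndependent ℝ p} :=
        isOpen_setOf_affineIndependent'
      rw [Metric.isOpen_iff] at hopen
      obtain ⟨ε, hε, hball⟩ := hopen _ hindep
      refine ⟨ε, hε, fun _ _ y hy => ?_⟩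
      apply hball
      rw [Metric.mem_ball]
      rcases isEmpty_or_nonempty ((s : Set (EuclideanSpace ℝ (Fin d))) : Type) with he | hne
      · have hy' : y = fun i : ((s : Set (EuclideanSpace ℝ (Fin d))) : Type) => (i : EuclideanSpace ℝ (Fin d)) := funext fun i => he.elim i
        rw [hy', dist_self]; exact hε
      · exact (dist_pi_lt_iff hε).2 hy
    · exact ⟨1, one_pos, fun h1 h2 => absurd ⟨h1, h2⟩ hs⟩
  choose f hf0 hf using key
  -- Take the minimum over all subsets of `P`.
  have hne : P.powerset.Nonempty := ⟨∅, Finset.empty_mem_powerset P⟩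
  set ε₀ : ℝ := P.powerset.inf' hne f with hε₀
  have hε₀pos : 0 < ε₀ := by
    rw [hε₀, Finset.lt_inf'_iff]
    exact fun s _ => hf0 s
  refine ⟨ε₀ / 2, by linarith, ?_⟩
  intro ℓ hℓ1 hℓd L _hLne hLrank
  by_contra hcard
  push_neg at hcard
  -- Extract a subset of size `ℓ + 1` of points whose balls meet `L`.
  have hsub : {x ∈ (P : Set (EuclideanSpace ℝ (Fin d))) |
      ((L : Set (EuclideanSpace ℝ (Fin d))) ∩ Metric.closedBall x (ε₀ / 2)).Nonempty} ⊆ (P : Set (EuclideanSpace ℝ (Fin d))) :=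
    fun x hx => hx.1
  obtain ⟨T, hT, hTcard⟩ := Set.exists_subset_card_eq (Nat.succ_le_of_lt hcard)
  have hTfin : T.Finite := (P.finite_toSet.subset (hT.trans hsub))
  set s : Finset (EuclideanSpace ℝ (Fin d)) := hTfin.toFinset with hs
  have hsP : s ⊆ P := by
    intro x hx
    have : x ∈ T := by simpa [hs] using hx
    exact (hsub (hT this))
  have hscard : s.card = ℓ + 1 := by
    rw [hs, ← Set.ncard_coe_finset (hTfin.toFinset), Set.Finite.coe_toFinset]
    exact hTcard
  -- For each point in `s`, choose a point of `L` in its ball.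
  have hchoose : ∀ i : ((s : Set (EuclideanSpace ℝ (Fin d))) : Type), ∃ y : EuclideanSpace ℝ (Fin d), y ∈ L ∧ dist y (i : EuclideanSpace ℝ (Fin d)) ≤ ε₀ / 2 := by
    rintro ⟨x, hx⟩
    have hxT : x ∈ T := by simpa [hs] using hx
    obtain ⟨y, hyL, hyB⟩ := (hT hxT).2
    exact ⟨y, hyL, Metric.mem_closedBall.1 hyB⟩
  choose y hyL hyd using hchoose
  -- The chosen points are affinely independent.
  have hymem : s ∈ P.powerset := Finset.mem_powerset.2 hsP
  have hεs : ε₀ ≤ f s := Finset.inf'_le f hymem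
  have hyindep : AffineIndependent ℝ y := by
    refine hf s hsP (by omega) y fun i => ?_
    calc dist (y i) (i : EuclideanSpace ℝ (Fin d)) ≤ ε₀ / 2 := hyd i
      _ < ε₀ := by linarith
      _ ≤ f s := hεs
  -- Its vector span has rank `ℓ`, but it is contained in `L.direction` of rank `ℓ - 1`.
  have hcardy : Fintype.card ((s : Set (EuclideanSpace ℝ (Fin d))) : Type) = ℓ + 1 := by
    simpa using hscard
  have hrank : Module.finrank ℝ (vectorSpan ℝ (Set.range y)) = ℓ :=
    hyindep.finrank_vectorSpan hcardy
  have hspan : affineSpan ℝ (Set.range y) ≤ L := by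
    rw [affineSpan_le]
    rintro _ ⟨i, rfl⟩
    exact hyL i
  have hdir : vectorSpan ℝ (Set.range y) ≤ L.direction := by
    rw [← direction_affineSpan]
    exact AffineSubspace.direction_le hspan
  have hle := Submodule.finrank_mono hdir
  rw [hrank, hLrank] at hle
  omega
end

section
/- Let D = (V, A) be a finite directed graph, and let F₋, F₊ : A → ℤ be integer-valued functions on the arcs and E₋, E₊ : V → ℤ be integer-valued functions on the vertices. Suppose there exists a flow f : A → ℝ such that F₋(a) ≤ f(a) ≤ F₊(a) for every arc a ∈ A and E₋(v) ≤ excess(f, v) ≤ E₊(v) for every vertex v ∈ V. Then there exists an integer-valued flow f′ : A → ℤ satisfying the same bounds: F₋(a) ≤ f′(a) ≤ F₊(a) for every a ∈ A and E₋(v) ≤ excess(f′, v) ≤ E₊(v) for every v ∈ V. -/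
/-!
The real flows within the bounds that vanish off `A` form a compact polytope `P`; take an
extreme point `g` of `P` (Krein–Milman). Suppose some arc carries a non-integral value of `g`,
and let `S` be the set of such arcs. Every vertex with integral excess that meets `S` meets it at
least twice, since otherwise its excess would be an integer plus `± g a` for a single `a ∈ S`.
Counting arc ends then gives more arcs in `S` than such vertices, or exactly as many when all
vertices meeting `S` have integral excess, in which case the excess constraints are dependent
because excesses sum to zero. Either way some nonzero flow `d` supported on `S` has zero excess
at every vertex where `g` has integral excess. As all bounds are integers, every non-integral
coordinate of `g` lies strictly inside its bounds, so `g ± ε • d ∈ P` for small `ε > 0`,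
contradicting extremality. Hence `g` is integral on `A`.
-/

/-- The excess of a flow `f` at a vertex `v` of the directed graph with arc set
`A ⊆ V × V`: the inflow into `v` minus the outflow out of `v`. -/
def flowExcess {V : Type*} [DecidableEq V] {R : Type*} [AddCommGroup R]
    (A : Finset (V × V)) (f : V × V → R) (v : V) : R :=
  ∑ a ∈ A.filter (fun a => a.2 = v), f a - ∑ a ∈ A.filter (fun a => a.1 = v), f a

section Excess

open Finset

variable {V : Type*} [DecidableEq V] {R : Type*} [AddCommGroup R] (A : Finset (V × V))

lemma flowExcess_congr {f g : V × V → R} (h : ∀ a ∈ A, f a = g a) (v : V) :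
    flowExcess A f v = flowExcess A g v := by
  unfold flowExcess
  rw [sum_congr rfl fun a ha => h a (mem_filter.1 ha).1,
    sum_congr rfl fun a ha => h a (mem_filter.1 ha).1]

lemma map_flowExcess {S : Type*} [AddCommGroup S] (φ : R →+ S) (f : V × V → R) (v : V) :
    φ (flowExcess A f v) = flowExcess A (fun a => φ (f a)) v := by
  simp only [flowExcess, map_sub, map_sum]

lemma flowExcess_add_smul {K : Type*} [Ring K] [Module K R] (f d : V × V → R) (t : K) (v : V) :
    flowExcess A (f + t • d) v = flowExcess A f v + t • flowExcess A d v := by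
  simp only [flowExcess, Pi.add_apply, Pi.smul_apply, sum_add_distrib, ← smul_sum, smul_sub]
  abel

lemma flowExcess_mem (H : AddSubgroup R) {f : V × V → R} (hf : ∀ a ∈ A, f a ∈ H) (v : V) :
    flowExcess A f v ∈ H :=
  sub_mem (sum_mem fun a ha => hf a (mem_filter.1 ha).1)
    (sum_mem fun a ha => hf a (mem_filter.1 ha).1)

lemma flowExcess_filter_add_filter_not (p : V × V → Prop) [DecidablePred p] (f : V × V → R)
    (v : V) :
    flowExcess A f v = flowExcess (A.filter p) f v + flowExcess (A.filter (¬ p ·)) f v := by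
  unfold flowExcess
  rw [← sum_filter_add_sum_filter_not (A.filter (·.2 = v)) p f,
    ← sum_filter_add_sum_filter_not (A.filter (·.1 = v)) p f]
  simp only [filter_comm _ p, filter_comm _ (¬ p ·)]
  abel

lemma sum_flowExcess [Fintype V] (f : V × V → R) : ∑ v, flowExcess A f v = 0 := by
  simp only [flowExcess, sum_sub_distrib, sum_fiberwise A Prod.snd f, sum_fiberwise A Prod.fst f,
    sub_self]

end Excess

section Degree

open Finset

variable {V : Type*} [DecidableEq V] {R : Type*} [AddCommGroup R]

/-- The number of arc ends of `S` at `v`; a loop at `v` counts twice. -/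
def arcDegree (S : Finset (V × V)) (v : V) : ℕ :=
  #(S.filter (·.2 = v)) + #(S.filter (·.1 = v))

lemma sum_arcDegree [Fintype V] (S : Finset (V × V)) : ∑ v, arcDegree S v = 2 * #S := by
  simp only [arcDegree, sum_add_distrib,
    ← card_eq_sum_card_fiberwise (fun a _ => mem_coe.2 (mem_univ _))]
  ring

lemma arcDegree_fst_pos {S : Finset (V × V)} {a : V × V} (ha : a ∈ S) : 0 < arcDegree S a.1 :=
  Nat.add_pos_right _ (card_pos.2 ⟨a, mem_filter.2 ⟨ha, rfl⟩⟩)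

lemma flowExcess_eq_zero_of_arcDegree_eq_zero (A S : Finset (V × V)) {d : V × V → R}
    (hd : ∀ a ∉ S, d a = 0) {v : V} (hv : arcDegree S v = 0) : flowExcess A d v = 0 := by
  simp only [arcDegree, Nat.add_eq_zero_iff, card_eq_zero, filter_eq_empty_iff] at hv
  unfold flowExcess
  rw [sum_eq_zero fun a ha => hd a fun haS => hv.1 haS (mem_filter.1 ha).2,
    sum_eq_zero fun a ha => hd a fun haS => hv.2 haS (mem_filter.1 ha).2, sub_zero]

lemma sum_flowExcess_eq_zero_of_arcDegree_pos_mem [Fintype V] (A S : Finset (V × V))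
    {d : V × V → R} (hd : ∀ a ∉ S, d a = 0) {U : Finset V} (hU : ∀ v, 0 < arcDegree S v → v ∈ U) :
    ∑ v ∈ U, flowExcess A d v = 0 :=
  (sum_subset (subset_univ U) fun v _ hv => flowExcess_eq_zero_of_arcDegree_eq_zero A S hd
    (Nat.eq_zero_of_not_pos fun h => hv (hU v h))).trans (sum_flowExcess A d)

lemma exists_flowExcess_eq_of_arcDegree_eq_one (S : Finset (V × V)) (f : V × V → R) {v : V}
    (hv : arcDegree S v = 1) : ∃ a ∈ S, flowExcess S f v = f a ∨ flowExcess S f v = -f a := by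
  unfold arcDegree at hv
  rcases Nat.add_eq_one_iff.1 hv with ⟨hin, hout⟩ | ⟨hin, hout⟩
  · obtain ⟨a, ha⟩ := card_eq_one.1 hout
    refine ⟨a, (mem_filter.1 (ha ▸ mem_singleton_self a)).1, Or.inr ?_⟩
    simp [flowExcess, ha, card_eq_zero.1 hin]
  · obtain ⟨a, ha⟩ := card_eq_one.1 hin
    refine ⟨a, (mem_filter.1 (ha ▸ mem_singleton_self a)).1, Or.inl ?_⟩
    simp [flowExcess, ha, card_eq_zero.1 hout]

open scoped Classical in
lemma flowExcess_notMem_of_arcDegree_eq_one (A : Finset (V × V)) (H : AddSubgroup R)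
    (f : V × V → R) {v : V} (hv : arcDegree (A.filter (f · ∉ H)) v = 1) :
    flowExcess A f v ∉ H := by
  obtain ⟨a, ha, hfa⟩ := exists_flowExcess_eq_of_arcDegree_eq_one _ f hv
  rw [flowExcess_filter_add_filter_not A (f · ∈ H),
    add_mem_cancel_left (flowExcess_mem _ H (fun a ha => (mem_filter.1 ha).2) v)]
  rcases hfa with h | h <;> simpa [h] using (mem_filter.1 ha).2

open scoped Classical in
lemma two_mul_card_add_card_le_two_mul_card [Fintype V] (A : Finset (V × V))
    (H : AddSubgroup R) (f : V × V → R) :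
    2 * #{v | 0 < arcDegree (A.filter (f · ∉ H)) v ∧ flowExcess A f v ∈ H}
      + #{v | 0 < arcDegree (A.filter (f · ∉ H)) v ∧ flowExcess A f v ∉ H}
      ≤ 2 * #(A.filter (f · ∉ H)) := by
  rw [← sum_arcDegree, card_filter, card_filter, mul_sum, ← sum_add_distrib]
  refine sum_le_sum fun v _ => ?_
  have := flowExcess_notMem_of_arcDegree_eq_one A H f (v := v)
  split_ifs <;> grind

end Degree

lemma LinearMap.ker_ne_bot_of_range_ne_top {K V W : Type*} [DivisionRing K] [AddCommGroup V]
    [Module K V] [AddCommGroup W] [Module K W] [FiniteDimensional K V] [FiniteDimensional K W]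
    {f : V →ₗ[K] W} (hf : range f ≠ ⊤) (h : Module.finrank K W ≤ Module.finrank K V) :
    ker f ≠ ⊥ := by
  have := f.finrank_range_add_finrank_ker
  have := Submodule.finrank_lt hf
  exact Submodule.one_le_finrank_iff.mp (by omega)

section Direction

open Finset

variable {V : Type*} [DecidableEq V]

def flowExcessLinearMap (K : Type*) {R : Type*} [Ring K] [AddCommGroup R] [Module K R]
    (A : Finset (V × V)) : (V × V → R) →ₗ[K] (V → R) where
  toFun f v := flowExcess A f v
  map_add' f g := funext fun v => by simpa using flowExcess_add_smul A f g (1 : K) v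
  map_smul' c f := funext fun v => by simpa [flowExcess] using flowExcess_add_smul A 0 f c v

open scoped Classical in
lemma exists_ne_zero_flow_supported_nonintegral [Fintype V] {K : Type*} [Field K]
    (A : Finset (V × V)) (H : AddSubgroup K) (g : V × V → K) (hg : ∃ a ∈ A, g a ∉ H) :
    ∃ d : V × V → K, d ≠ 0 ∧ (∀ a, d a ≠ 0 → a ∈ A ∧ g a ∉ H) ∧
      ∀ v, flowExcess A g v ∈ H → flowExcess A d v = 0 := by
  have hcount := two_mul_card_add_card_le_two_mul_card A H g
  set S := A.filter (g · ∉ H)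
  set U := ({v | 0 < arcDegree S v ∧ flowExcess A g v ∈ H} : Finset V)
  let Φ : (V × V → K) →ₗ[K] ((↥(Sᶜ) → K) × (↥U → K)) :=
    (LinearMap.funLeft K K Subtype.val).prod
      (LinearMap.funLeft K K Subtype.val ∘ₗ flowExcessLinearMap K A)
  have hdim : Module.finrank K (V × V → K) = #Sᶜ + #S := by
    rw [Module.finrank_fintype_fun_eq_card, card_compl_add_card]
  have hcodim : Module.finrank K ((↥(Sᶜ) → K) × (↥U → K)) = #Sᶜ + #U := by
    simp only [Module.finrank_prod, Module.finrank_fintype_fun_eq_card, Fintype.card_coe]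
  have hker : LinearMap.ker Φ ≠ ⊥ := by
    by_cases hT : ∃ w, 0 < arcDegree S w ∧ flowExcess A g w ∉ H
    · obtain ⟨w, hw⟩ := hT
      have : 0 < #({v | 0 < arcDegree S v ∧ flowExcess A g v ∉ H} : Finset V) :=
        card_pos.2 ⟨w, mem_filter.2 ⟨mem_univ w, hw⟩⟩
      exact LinearMap.ker_ne_bot_of_finrank_lt (by omega)
    · push Not at hT
      obtain ⟨a, haA, hga⟩ := hg
      have hu : a.1 ∈ U := by
        have := arcDegree_fst_pos (show a ∈ S by simp [S, haA, hga])
        simp [U, this, hT _ this]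
      refine LinearMap.ker_ne_bot_of_range_ne_top (fun hΦ => ?_) (by omega)
      obtain ⟨d, hd⟩ : (0, Pi.single ⟨a.1, hu⟩ 1) ∈ LinearMap.range Φ := hΦ ▸ Submodule.mem_top
      have hdS : ∀ b ∉ S, d b = 0 :=
        fun b hb => congr_fun (congr_arg Prod.fst hd) ⟨b, mem_compl.2 hb⟩
      have hdU : ∀ v : U, flowExcess A d v = Pi.single (M := fun _ => K) ⟨a.1, hu⟩ 1 v :=
        fun v => congr_fun (congr_arg Prod.snd hd) v
      have hsum := sum_flowExcess_eq_zero_of_arcDegree_pos_mem A S hdS (U := U)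
        fun v hv => by simp [U, hv, hT v hv]
      simp [← sum_coe_sort U, hdU] at hsum
  obtain ⟨d, hd, hd0⟩ := Submodule.exists_mem_ne_zero_of_ne_bot hker
  refine ⟨d, hd0, fun b hb => ?_, fun v hv => ?_⟩
  · by_contra hbS
    exact hb (congr_fun (congr_arg Prod.fst hd) ⟨b, mem_compl.2 (by simpa [S] using hbS)⟩)
  rcases Nat.eq_zero_or_pos (arcDegree S v) with h | h
  · exact flowExcess_eq_zero_of_arcDegree_eq_zero A S
      (fun b hb => congr_fun (congr_arg Prod.fst hd) ⟨b, mem_compl.2 hb⟩) h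
  · exact congr_fun (congr_arg Prod.snd hd) ⟨v, by simp [U, h, hv]⟩

end Direction

section Polytope

open Set Filter Topology

variable {V : Type*} [DecidableEq V] (A : Finset (V × V)) (Fm Fp : V × V → ℤ) (Em Ep : V → ℤ)

/-- Flows are required to vanish off `A` so that the polytope is compact. -/
def flowPolytope : Set (V × V → ℝ) :=
  {g | (∀ a ∈ A, g a ∈ Icc (Fm a : ℝ) (Fp a)) ∧ (∀ a ∉ A, g a = 0) ∧
    ∀ v, flowExcess A g v ∈ Icc (Em v : ℝ) (Ep v)}

lemma isCompact_flowPolytope : IsCompact (flowPolytope A Fm Fp Em Ep) := by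
  have hbox : flowPolytope A Fm Fp Em Ep ⊆
      univ.pi fun a => Icc (min (Fm a : ℝ) 0) (max (Fp a : ℝ) 0) := by
    intro g ⟨hgA, hg0, _⟩ a _
    by_cases ha : a ∈ A
    · exact ⟨min_le_of_left_le (hgA a ha).1, le_max_of_le_left (hgA a ha).2⟩
    · simp [hg0 a ha]
  refine (isCompact_univ_pi fun a => isCompact_Icc).of_isClosed_subset ?_ hbox
  have hexc : ∀ v, Continuous fun g : V × V → ℝ => flowExcess A g v := fun v => by
    unfold flowExcess; fun_prop
  simp only [flowPolytope, ofPred_and, ofPred_forall]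
  refine (isClosed_iInter fun a => isClosed_iInter fun _ => ?_).inter
    ((isClosed_iInter fun a => isClosed_iInter fun _ => ?_).inter
      (isClosed_iInter fun v => isClosed_Icc.preimage (hexc v)))
  · exact isClosed_Icc.preimage (continuous_apply a)
  · exact isClosed_eq (continuous_apply a) continuous_const

lemma eventually_add_mul_mem_Icc {x c : ℝ} {m M : ℤ} (hx : x ∈ Icc (m : ℝ) M)
    (hc : x ∈ AddSubgroup.zmultiples 1 → c = 0) : ∀ᶠ t in 𝓝 0, x + t * c ∈ Icc (m : ℝ) M := by
  by_cases hxZ : x ∈ AddSubgroup.zmultiples 1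
  · simp [hc hxZ, hx]
  · have hm : (m : ℝ) < x :=
      hx.1.lt_of_ne fun h => hxZ (h ▸ AddSubgroup.intCast_mem_zmultiples_one m)
    have hM : x < M := hx.2.lt_of_ne fun h => hxZ (h ▸ AddSubgroup.intCast_mem_zmultiples_one M)
    have hlim : Tendsto (fun t : ℝ => x + t * c) (𝓝 0) (𝓝 x) :=
      (by fun_prop : Continuous fun t : ℝ => x + t * c).tendsto' 0 x (by simp)
    exact (hlim.eventually (Ioo_mem_nhds hm hM)).mono fun _ h => Ioo_subset_Icc_self h

lemma eventually_add_smul_mem_flowPolytope [Finite V] {g d : V × V → ℝ}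
    (hg : g ∈ flowPolytope A Fm Fp Em Ep)
    (hd : ∀ a, d a ≠ 0 → a ∈ A ∧ g a ∉ AddSubgroup.zmultiples 1)
    (hexc : ∀ v, flowExcess A g v ∈ AddSubgroup.zmultiples 1 → flowExcess A d v = 0) :
    ∀ᶠ t in 𝓝 (0 : ℝ), g + t • d ∈ flowPolytope A Fm Fp Em Ep := by
  obtain ⟨hgA, hg0, hgE⟩ := hg
  have hd0 : ∀ a, (a ∉ A ∨ g a ∈ AddSubgroup.zmultiples 1) → d a = 0 := fun a ha => by
    by_contra h
    have := hd a h
    tauto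
  have harc : ∀ a, ∀ᶠ t in 𝓝 (0 : ℝ), a ∈ A → (g + t • d) a ∈ Icc (Fm a : ℝ) (Fp a) := by
    intro a
    by_cases ha : a ∈ A
    · simpa [ha, mul_comm] using
        eventually_add_mul_mem_Icc (hgA a ha) fun h => hd0 a (Or.inr h)
    · exact .of_forall fun _ h => absurd h ha
  have hvert : ∀ v, ∀ᶠ t in 𝓝 (0 : ℝ), flowExcess A (g + t • d) v ∈ Icc (Em v : ℝ) (Ep v) :=
    fun v => by
      simpa only [flowExcess_add_smul, smul_eq_mul] using
        eventually_add_mul_mem_Icc (hgE v) (hexc v)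
  filter_upwards [eventually_all.2 harc, eventually_all.2 hvert] with t harc hvert
  exact ⟨harc, fun a ha => by simp [hg0 a ha, hd0 a (Or.inl ha)], hvert⟩

lemma mem_zmultiples_of_mem_extremePoints [Fintype V] {g : V × V → ℝ}
    (hg : g ∈ (flowPolytope A Fm Fp Em Ep).extremePoints ℝ) :
    ∀ a ∈ A, g a ∈ AddSubgroup.zmultiples 1 := by
  by_contra! h
  obtain ⟨d, hd0, hd, hexc⟩ := exists_ne_zero_flow_supported_nonintegral A _ g h
  have hadd := eventually_add_smul_mem_flowPolytope A Fm Fp Em Ep hg.1 hd hexc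
  have hsub : ∀ᶠ t in 𝓝 (0 : ℝ), g - t • d ∈ flowPolytope A Fm Fp Em Ep := by
    simpa [neg_smul, ← sub_eq_add_neg] using
      (continuous_neg.tendsto' (0 : ℝ) 0 neg_zero).eventually hadd
  obtain ⟨ε, ⟨hεadd, hεsub⟩, hε⟩ :=
    (((hadd.and hsub).filter_mono nhdsWithin_le_nhds).and (self_mem_nhdsWithin (s := Ioi 0))).exists
  have := ((mem_extremePoints.1 hg).2 _ hεsub _ hεadd (mem_openSegment_sub_add g (ε • d))).1
  exact hd0 ((smul_eq_zero.1 (sub_eq_self.1 this)).resolve_left (ne_of_gt hε))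

lemma exists_int_flow_of_mem_flowPolytope {g : V × V → ℝ} (hg : g ∈ flowPolytope A Fm Fp Em Ep)
    (hint : ∀ a ∈ A, g a ∈ AddSubgroup.zmultiples 1) :
    ∃ f' : V × V → ℤ, (∀ a ∈ A, Fm a ≤ f' a ∧ f' a ≤ Fp a) ∧
      ∀ v, Em v ≤ flowExcess A f' v ∧ flowExcess A f' v ≤ Ep v := by
  have hfloor : ∀ a ∈ A, (⌊g a⌋ : ℝ) = g a := fun a ha => by
    obtain ⟨k, hk⟩ := AddSubgroup.mem_zmultiples_iff.1 (hint a ha)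
    rw [← hk, zsmul_one, Int.floor_intCast]
  refine ⟨fun a => ⌊g a⌋, fun a ha => ?_, fun v => ?_⟩
  · have := hg.1 a ha
    rw [Set.mem_Icc, ← hfloor a ha] at this
    exact_mod_cast this
  · have hexc : ((flowExcess A (fun a => ⌊g a⌋) v : ℤ) : ℝ) = flowExcess A g v := by
      rw [← flowExcess_congr A hfloor v]
      exact map_flowExcess A (Int.castAddHom ℝ) _ v
    have := hg.2.2 v
    rw [Set.mem_Icc, ← hexc] at this
    exact_mod_cast this

end Polytope

/-- **Integer rounding of flows.**
Let `D = (V, A)` be a finite directed graph, `F₋, F₊ : A → ℤ` integer bounds on the arcs and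
`E₋, E₊ : V → ℤ` integer bounds on the vertices.  If there is a real-valued flow `f` with
`F₋(a) ≤ f(a) ≤ F₊(a)` for every arc `a` and `E₋(v) ≤ excess(f, v) ≤ E₊(v)` for every
vertex `v`, then there is an integer-valued flow `f'` satisfying the same bounds. -/
theorem exists_integer_flow_of_real_flow
    {V : Type*} [Fintype V] [DecidableEq V]
    (A : Finset (V × V))
    (Fm Fp : V × V → ℤ) (Em Ep : V → ℤ)
    (f : V × V → ℝ)
    (hF : ∀ a ∈ A, (Fm a : ℝ) ≤ f a ∧ f a ≤ (Fp a : ℝ))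
    (hE : ∀ v : V, (Em v : ℝ) ≤ flowExcess A f v ∧ flowExcess A f v ≤ (Ep v : ℝ)) :
    ∃ f' : V × V → ℤ,
      (∀ a ∈ A, Fm a ≤ f' a ∧ f' a ≤ Fp a) ∧
      (∀ v : V, Em v ≤ flowExcess A f' v ∧ flowExcess A f' v ≤ Ep v) := by
  classical
  let f₀ : V × V → ℝ := fun a => if a ∈ A then f a else 0
  have hf₀ : f₀ ∈ flowPolytope A Fm Fp Em Ep := by
    refine ⟨fun a ha => by simpa [f₀, ha] using hF a ha, fun a ha => by simp [f₀, ha], fun v => ?_⟩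
    rw [flowExcess_congr A (g := f) (fun a ha => by simp [f₀, ha])]
    exact hE v
  obtain ⟨g, hg⟩ := (isCompact_flowPolytope A Fm Fp Em Ep).extremePoints_nonempty ⟨f₀, hf₀⟩
  exact exists_int_flow_of_mem_flowPolytope A Fm Fp Em Ep hg.1
    (mem_zmultiples_of_mem_extremePoints A Fm Fp Em Ep hg)
end
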